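/- Under r-g < λ < r-g+α/κ and θ₁ > 1, θ₂ < 0, fix a > 0 with a > m. Then ∂G/∂a(a, b) = ((θ₁-1)(1-θ₂)(κ(λ-(r-g))-α)/((θ₁-θ₂)(λ-(r-g))a))·[(b/a)^{1-θ₁} - (b/a)^{1-θ₂}] > 0 for every b > a. -/

import Mathlib

/-!
For `m < a` and `m ≤ b` the indicator terms of `G` are constant near `a`, so `G (·, b)` is the
smooth combination `((θ₁-1)(b/a)^{1-θ₂} + (1-θ₂)(b/a)^{1-θ₁}) K + α/(λ-(r-g))` with
`K = (κ(λ-(r-g)) - α)/((θ₁-θ₂)(λ-(r-g))) < 0`. Since `d/da (b/a)^p = -p (b/a)^p / a`, the two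
`p`-factors combine into `(θ₁-1)(1-θ₂)`, and the sign comes from `(b/a)^{1-θ₁} < (b/a)^{1-θ₂}`.
-/

open Real

noncomputable def G (r g lam α κ m θ₁ θ₂ a b : ℝ) : ℝ :=
  ((θ₁ - 1) * (b / a) ^ (1 - θ₂) + (1 - θ₂) * (b / a) ^ (1 - θ₁)) *
    (κ / (θ₁ - θ₂) - (if m ≤ b then α else 0) / ((θ₁ - θ₂) * (lam - (r - g))))
  + (α / ((θ₁ - θ₂) * (lam - (r - g)))) *
      ((1 - θ₂) * (m / a) ^ (1 - θ₁) + (θ₁ - 1) * (m / a) ^ (1 - θ₂)) *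
      (if a < m ∧ m < b then 1 else 0)
  + (α / (lam - (r - g))) * (if m ≤ a then 1 else 0)

noncomputable def dGda (r g lam α κ θ₁ θ₂ a b : ℝ) : ℝ :=
  (θ₁ - 1) * (1 - θ₂) * (κ * (lam - (r - g)) - α) / ((θ₁ - θ₂) * (lam - (r - g)) * a) *
    ((b / a) ^ (1 - θ₁) - (b / a) ^ (1 - θ₂))

theorem hasDerivAt_div_rpow {a b : ℝ} (ha : a ≠ 0) (hb : b ≠ 0) (p : ℝ) :
    HasDerivAt (fun x => (b / x) ^ p) (-p * (b / a) ^ p / a) a := by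
  have hdiv : HasDerivAt (fun x => b / x) (-b / a ^ 2) a := by
    simpa [div_eq_mul_inv, neg_div] using (hasDerivAt_inv ha).const_mul b
  convert hdiv.rpow_const (p := p) (Or.inl (div_ne_zero hb ha)) using 1
  rw [rpow_sub_one (div_ne_zero hb ha)]
  field_simp

section G

variable {r g lam α κ m θ₁ θ₂ a b : ℝ}

theorem G_of_le (ha : m ≤ a) (hb : m ≤ b) (hL : lam - (r - g) ≠ 0) :
    G r g lam α κ m θ₁ θ₂ a b =
      ((θ₁ - 1) * (b / a) ^ (1 - θ₂) + (1 - θ₂) * (b / a) ^ (1 - θ₁)) *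
        ((κ * (lam - (r - g)) - α) / ((θ₁ - θ₂) * (lam - (r - g)))) + α / (lam - (r - g)) := by
  have hnot : ¬(a < m ∧ m < b) := fun h => h.1.not_ge ha
  simp only [G, if_pos hb, if_pos ha, if_neg hnot]
  field_simp
  ring

theorem hasDerivAt_G_of_lt (ha : m < a) (hb : m ≤ b) (ha₀ : a ≠ 0) (hb₀ : b ≠ 0)
    (hL : lam - (r - g) ≠ 0) :
    HasDerivAt (fun x => G r g lam α κ m θ₁ θ₂ x b) (dGda r g lam α κ θ₁ θ₂ a b) a := by
  set K := (κ * (lam - (r - g)) - α) / ((θ₁ - θ₂) * (lam - (r - g)))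
  have hsmooth := ((((hasDerivAt_div_rpow ha₀ hb₀ (1 - θ₂)).const_mul (θ₁ - 1)).add
    ((hasDerivAt_div_rpow ha₀ hb₀ (1 - θ₁)).const_mul (1 - θ₂))).mul_const K).add_const
      (α / (lam - (r - g)))
  have hG : (fun x => G r g lam α κ m θ₁ θ₂ x b) =ᶠ[nhds a] fun x =>
      ((θ₁ - 1) * (b / x) ^ (1 - θ₂) + (1 - θ₂) * (b / x) ^ (1 - θ₁)) * K
        + α / (lam - (r - g)) := by
    filter_upwards [eventually_gt_nhds ha] with x hx
    exact G_of_le hx.le hb hL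
  refine (hsmooth.congr_of_eventuallyEq hG).congr_deriv ?_
  simp only [dGda, K]
  field_simp
  ring

theorem dGda_pos (hθ₁ : 1 < θ₁) (hθ₂ : θ₂ < 1) (hL : 0 < lam - (r - g))
    (hK : κ * (lam - (r - g)) - α < 0) (ha : 0 < a) (hab : a < b) :
    0 < dGda r g lam α κ θ₁ θ₂ a b := by
  have hpow : (b / a) ^ (1 - θ₁) < (b / a) ^ (1 - θ₂) :=
    rpow_lt_rpow_of_exponent_lt ((one_lt_div ha).mpr hab) (by linarith)
  refine mul_pos_of_neg_of_neg (div_neg_of_neg_of_pos ?_ ?_) (sub_neg.mpr hpow)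
  · exact mul_neg_of_pos_of_neg (mul_pos (by linarith) (by linarith)) hK
  · exact mul_pos (mul_pos (by linarith) hL) ha

end G

theorem stmt_17_general (r g lam α κ m θ₁ θ₂ a : ℝ)
    (hκ : 0 < κ) (hm : 0 < m)
    (hlam₁ : r - g < lam) (hlam₂ : lam < r - g + α / κ)
    (hθ₁ : θ₁ > 1) (hθ₂ : θ₂ < 0)
    (ha : m < a) :
    ∀ b, a < b →
      HasDerivAt (fun a' => G r g lam α κ m θ₁ θ₂ a' b)
        ((θ₁ - 1) * (1 - θ₂) * (κ * (lam - (r - g)) - α)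
            / ((θ₁ - θ₂) * (lam - (r - g)) * a) *
          ((b / a) ^ (1 - θ₁) - (b / a) ^ (1 - θ₂))) a ∧
      0 < (θ₁ - 1) * (1 - θ₂) * (κ * (lam - (r - g)) - α)
            / ((θ₁ - θ₂) * (lam - (r - g)) * a) *
          ((b / a) ^ (1 - θ₁) - (b / a) ^ (1 - θ₂)) := by
  intro b hab
  have ha₀ : 0 < a := hm.trans ha
  have hL : 0 < lam - (r - g) := by linarith
  have hK : κ * (lam - (r - g)) - α < 0 :=
    sub_neg.mpr ((lt_div_iff₀' hκ).mp (by linarith))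
  exact ⟨hasDerivAt_G_of_lt ha (ha.trans hab).le ha₀.ne' (ha₀.trans hab).ne' hL.ne',
    dGda_pos hθ₁ (by linarith) hL hK ha₀ hab⟩

/-- for a > m, the partial derivative ∂G/∂a(a,b) equals
((θ₁-1)(1-θ₂)(κ(λ-(r-g))-α)/((θ₁-θ₂)(λ-(r-g))a))·[(b/a)^{1-θ₁} - (b/a)^{1-θ₂}]
and is strictly positive for every b > a. -/
theorem stmt_17 (σ r g lam α κ m θ₁ θ₂ a : ℝ) (hσ : 0 < σ)
    (hα : 0 < α) (hκ : 0 < κ) (hm : 0 < m)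
    (hlam₁ : r - g < lam) (hlam₂ : lam < r - g + α / κ)
    (hθ₁ : θ₁ > 1) (hθ₂ : θ₂ < 0)
    (hroot₁ : (1/2) * σ ^ 2 * θ₁ * (θ₁ - 1) + (r - g) * θ₁ - lam = 0)
    (hroot₂ : (1/2) * σ ^ 2 * θ₂ * (θ₂ - 1) + (r - g) * θ₂ - lam = 0)
    (ha : m < a) :
    ∀ b, a < b →
      HasDerivAt (fun a' => G r g lam α κ m θ₁ θ₂ a' b)
        ((θ₁ - 1) * (1 - θ₂) * (κ * (lam - (r - g)) - α)
            / ((θ₁ - θ₂) * (lam - (r - g)) * a) *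
          ((b / a) ^ (1 - θ₁) - (b / a) ^ (1 - θ₂))) a ∧
      0 < (θ₁ - 1) * (1 - θ₂) * (κ * (lam - (r - g)) - α)
            / ((θ₁ - θ₂) * (lam - (r - g)) * a) *
          ((b / a) ^ (1 - θ₁) - (b / a) ^ (1 - θ₂)) :=
  stmt_17_general r g lam α κ m θ₁ θ₂ a hκ hm hlam₁ hlam₂ hθ₁ hθ₂ ha
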